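/- arXiv:2003.07106 — 3 statements merged into one kernel-verified Lean document; each statement's English description precedes it below -/
import Mathlib

section
/- Let (G,κ) be a capacitated graph with κ(x) ≤ d_G(x) for all x, and let X = {x : κ(x) = d_G(x)}. If a vertex u satisfies |N_G(u) ∩ X| ≤ κ(u), then there exists a DP-Nash subgraph (D, P; E) of (G,κ) with u ∈ D and N_G(u) ∩ X ⊆ P. -/
open Finset
open scoped Classical

noncomputable section

variable {V : Type*} [Fintype V]

/-- Degree of a vertex in a (simple) graph on a finite vertex set. -/
def deg (H : SimpleGraph V) (x : V) : ℕ :=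
  (Finset.univ.filter fun y => H.Adj x y).card

/-- `(D, P; H)` is a DP-Nash subgraph of the capacitated graph `(G, κ)`:
`H` is a spanning subgraph of `G`, bipartite with partite sets `D` and `P`,
no vertex of `P` is isolated in `H`, and every `x ∈ D` has
`H`-degree `min (d_G x) (κ x)`. -/
def IsDPNash (G : SimpleGraph V) (κ : V → ℕ) (D P : Finset V) (H : SimpleGraph V) : Prop :=
  H ≤ G ∧ D ∪ P = Finset.univ ∧ Disjoint D P ∧
    (∀ ⦃u v⦄, H.Adj u v → (u ∈ D ∧ v ∈ P) ∨ (u ∈ P ∧ v ∈ D)) ∧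
    (∀ v ∈ P, 0 < deg H v) ∧
    (∀ x ∈ D, deg H x = min (deg G x) (κ x))

/-- `X = {x : κ(x) = d_G(x)}`. -/
def XX (G : SimpleGraph V) (κ : V → ℕ) : Finset V :=
  Finset.univ.filter fun x => κ x = deg G x

/-- `Y = N(X) \ X`. -/
def YY (G : SimpleGraph V) (κ : V → ℕ) : Finset V :=
  Finset.univ.filter fun y => y ∉ XX G κ ∧ ∃ x ∈ XX G κ, G.Adj x y

/-- `Z = V \ (X ∪ Y)`. -/
def ZZ (G : SimpleGraph V) (κ : V → ℕ) : Finset V :=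
  Finset.univ \ (XX G κ ∪ YY G κ)

/-- `Y^{κ>0} = {y ∈ Y : κ(y) > 0}`. -/
def Ypos (G : SimpleGraph V) (κ : V → ℕ) : Finset V :=
  (YY G κ).filter fun y => 0 < κ y

/-- The neighbours of `x` in `G` lying in `W`. -/
def nbrW (G : SimpleGraph V) (x : V) (W : Finset V) : Finset V :=
  Finset.univ.filter fun y => G.Adj x y ∧ y ∈ W

/-- `L(W) = {x ∈ X ∪ Z : |N_G(x) ∩ W| > d_G(x) - κ(x)}`. -/
def LL (G : SimpleGraph V) (κ : V → ℕ) (W : Finset V) : Finset V :=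
  (XX G κ ∪ ZZ G κ).filter fun x => deg G x - κ x < (nbrW G x W).card

/-!
Put `u` into `D` and give it a set `C` of `κ u` neighbours containing `N(u) ∩ X`, all put into `P`.
Delete `u` and `C`, cap every capacity at the new degree, and solve the smaller instance
recursively; this is always possible, since a vertex whose capacity equals its degree can play the
role of `u` with `C` all of its neighbours. A vertex `x` placed in `D` by the smaller instance has
lost only its neighbours in `C`, and possibly `u`. It loses `u` only if it is a neighbour of `u`
outside `C`, hence outside `X`, so that `κ x < d(x)`: either way its neighbours in `C` suffice to
top its degree back up to `κ x`.
-/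

lemma mem_nbrW {G : SimpleGraph V} {x y : V} {W : Finset V} :
    y ∈ nbrW G x W ↔ G.Adj x y ∧ y ∈ W := by
  simp [nbrW]

section nbrW

variable (G : SimpleGraph V) (x : V)

lemma nbrW_subset (W : Finset V) : nbrW G x W ⊆ W :=
  fun _ hy => (mem_nbrW.1 hy).2

lemma nbrW_mono {W W' : Finset V} (h : W ⊆ W') : nbrW G x W ⊆ nbrW G x W' :=
  fun _ hy => mem_nbrW.2 ⟨(mem_nbrW.1 hy).1, h (mem_nbrW.1 hy).2⟩

lemma card_nbrW_univ : (nbrW G x univ).card = deg G x := by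
  simp [nbrW, deg]

lemma card_nbrW_eq_card_nbrW_sdiff_add {R S : Finset V} (hSR : S ⊆ R) :
    (nbrW G x R).card = (nbrW G x (R \ S)).card + (nbrW G x S).card := by
  rw [← card_filter_add_card_filter_not (s := nbrW G x R) (· ∈ S), add_comm]
  congr 2 <;> ext y <;> simp only [mem_filter, mem_nbrW, mem_sdiff]
  · tauto
  · exact ⟨fun ⟨⟨h, _⟩, hy⟩ => ⟨h, hy⟩, fun ⟨h, hy⟩ => ⟨⟨h, hSR hy⟩, hy⟩⟩

lemma card_nbrW_insert_le (u : V) (C : Finset V) :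
    (nbrW G x (insert u C)).card ≤ (nbrW G x C).card + if G.Adj x u then 1 else 0 := by
  split_ifs with hxu
  · refine (card_le_card fun y hy => ?_).trans (card_insert_le u _)
    obtain ⟨hxy, rfl | hyC⟩ := (mem_nbrW.1 hy).imp_right mem_insert.1
    · exact mem_insert_self _ _
    · exact mem_insert_of_mem (mem_nbrW.2 ⟨hxy, hyC⟩)
  · refine card_le_card fun y hy => ?_
    obtain ⟨hxy, rfl | hyC⟩ := (mem_nbrW.1 hy).imp_right mem_insert.1
    · exact absurd hxy hxu
    · exact mem_nbrW.2 ⟨hxy, hyC⟩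

end nbrW

lemma le_card_nbrW_sdiff_insert_add {G : SimpleGraph V} {R C : Finset V} {u v : V} {k : ℕ}
    (hins : insert u C ⊆ R) (hk : k ≤ (nbrW G v R).card)
    (hslack : G.Adj u v → k < (nbrW G v R).card) :
    k ≤ (nbrW G v (R \ insert u C)).card + (nbrW G v C).card := by
  have hsplit := card_nbrW_eq_card_nbrW_sdiff_add G v hins
  have hinsert := card_nbrW_insert_le G v u C
  by_cases hvu : G.Adj v u
  · have := hslack hvu.symm
    simp only [hvu, if_true] at hinsert
    omega
  · simp only [hvu, if_false] at hinsert
    omega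

/-- A DP-Nash subgraph on the vertex set `R`, recorded by the sets `f x ⊆ P` of the `κ x`
neighbours chosen by the vertices `x ∈ D`; the values of `f` outside `D` are irrelevant. -/
structure DPAssignment (G : SimpleGraph V) (κ : V → ℕ) (R : Finset V) where
  D : Finset V
  P : Finset V
  f : V → Finset V
  union_eq : D ∪ P = R
  disjoint : Disjoint D P
  subset_nbrW : ∀ x ∈ D, f x ⊆ nbrW G x P
  card_eq : ∀ x ∈ D, (f x).card = κ x
  covers : ∀ p ∈ P, ∃ x ∈ D, p ∈ f x

namespace DPAssignment

variable {G : SimpleGraph V} {κ : V → ℕ}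

def empty : DPAssignment G κ ∅ :=
  ⟨∅, ∅, fun _ => ∅, by simp, by simp, by simp, by simp, by simp⟩

lemma D_subset {R : Finset V} (A : DPAssignment G κ R) : A.D ⊆ R :=
  subset_union_left.trans A.union_eq.subset

lemma P_subset {R : Finset V} (A : DPAssignment G κ R) : A.P ⊆ R :=
  subset_union_right.trans A.union_eq.subset

theorem exists_extend {R C : Finset V} {u : V} (hu : u ∈ R)
    (hκ : ∀ x ∈ R, κ x ≤ (nbrW G x R).card) (hC : C ⊆ nbrW G u R) (hCcard : C.card = κ u)
    (hslack : ∀ v ∈ R \ insert u C, G.Adj u v → κ v < (nbrW G v R).card)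
    (A : DPAssignment G (fun v => min (κ v) (nbrW G v (R \ insert u C)).card) (R \ insert u C)) :
    ∃ B : DPAssignment G κ R, u ∈ B.D ∧ C ⊆ B.P := by
  have hins : insert u C ⊆ R := insert_subset hu (hC.trans (nbrW_subset G u R))
  have hCdisj : Disjoint (R \ insert u C) C :=
    disjoint_sdiff_self_left.mono_right (subset_insert u C)
  have hne : ∀ x ∈ A.D, x ≠ u := fun x hx hxu =>
    (mem_sdiff.1 (A.D_subset hx)).2 (hxu ▸ mem_insert_self u C)
  have htop : ∀ x ∈ A.D,
      κ x - min (κ x) (nbrW G x (R \ insert u C)).card ≤ (nbrW G x C).card := by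
    intro x hx
    obtain ⟨hxR, hxuC⟩ := mem_sdiff.1 (A.D_subset hx)
    have := le_card_nbrW_sdiff_insert_add hins (hκ x hxR) (hslack x (mem_sdiff.2 ⟨hxR, hxuC⟩))
    omega
  choose! T hTsub hTcard using fun x hx => exists_subset_card_eq (htop x hx)
  refine ⟨⟨insert u A.D, A.P ∪ C, fun x => if x = u then C else A.f x ∪ T x,
    ?union_eq, ?disjoint, ?subset_nbrW, ?card_eq, ?covers⟩, mem_insert_self u A.D,
    subset_union_right⟩
  case union_eq =>
    rw [← union_assoc, insert_union, A.union_eq]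
    ext x
    have := @hins x
    simp only [mem_union, mem_insert, mem_sdiff] at this ⊢
    tauto
  case disjoint =>
    refine disjoint_insert_left.2 ⟨fun h => ?_, disjoint_union_right.2
      ⟨A.disjoint, hCdisj.mono_left A.D_subset⟩⟩
    rcases mem_union.1 h with huP | huC
    · exact (mem_sdiff.1 (A.P_subset huP)).2 (mem_insert_self u C)
    · exact (mem_nbrW.1 (hC huC)).1.ne rfl
  case subset_nbrW =>
    rintro x hx
    rcases mem_insert.1 hx with rfl | hxD
    · simp only [if_true]
      exact fun y hy => mem_nbrW.2 ⟨(mem_nbrW.1 (hC hy)).1, mem_union_right _ hy⟩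
    · simp only [hne x hxD, if_false]
      exact union_subset ((A.subset_nbrW x hxD).trans (nbrW_mono G x subset_union_left))
        ((hTsub x hxD).trans (nbrW_mono G x subset_union_right))
  case card_eq =>
    rintro x hx
    rcases mem_insert.1 hx with rfl | hxD
    · simpa using hCcard
    · have hdisj : Disjoint (A.f x) (T x) :=
        hCdisj.mono ((A.subset_nbrW x hxD).trans ((nbrW_subset G x _).trans A.P_subset))
          ((hTsub x hxD).trans (nbrW_subset G x C))
      simp only [hne x hxD, if_false]
      rw [card_union_of_disjoint hdisj, A.card_eq x hxD, hTcard x hxD]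
      omega
  case covers =>
    rintro p hp
    rcases mem_union.1 hp with hpP | hpC
    · obtain ⟨x, hxD, hpx⟩ := A.covers p hpP
      exact ⟨x, mem_insert_of_mem hxD, by simpa [hne x hxD] using mem_union_left _ hpx⟩
    · exact ⟨u, mem_insert_self u A.D, by simpa using hpC⟩

lemma exists_vertex_slack {R : Finset V} (hR : R.Nonempty)
    (hκ : ∀ x ∈ R, κ x ≤ (nbrW G x R).card) :
    ∃ u ∈ R, ∃ C ⊆ nbrW G u R, C.card = κ u ∧
      ∀ v ∈ R \ insert u C, G.Adj u v → κ v < (nbrW G v R).card := by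
  by_cases htight : ∃ u ∈ R, κ u = (nbrW G u R).card
  · obtain ⟨u, hu, hκu⟩ := htight
    refine ⟨u, hu, nbrW G u R, subset_rfl, hκu.symm, fun v hv huv => ?_⟩
    obtain ⟨hvR, hvuC⟩ := mem_sdiff.1 hv
    exact absurd (mem_insert_of_mem (mem_nbrW.2 ⟨huv, hvR⟩)) hvuC
  · push Not at htight
    obtain ⟨u, hu⟩ := hR
    obtain ⟨C, hC, hCcard⟩ := exists_subset_card_eq (hκ u hu)
    exact ⟨u, hu, C, hC, hCcard, fun v hv _ =>
      (hκ v (mem_sdiff.1 hv).1).lt_of_ne (htight v (mem_sdiff.1 hv).1)⟩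

theorem nonempty (κ : V → ℕ) (R : Finset V) (hκ : ∀ x ∈ R, κ x ≤ (nbrW G x R).card) :
    Nonempty (DPAssignment G κ R) := by
  induction R using Finset.strongInduction generalizing κ with
  | H R ih =>
    rcases R.eq_empty_or_nonempty with rfl | hR
    · exact ⟨empty⟩
    obtain ⟨u, hu, C, hC, hCcard, hslack⟩ := exists_vertex_slack hR hκ
    have hins : insert u C ⊆ R := insert_subset hu (hC.trans (nbrW_subset G u R))
    obtain ⟨A⟩ := ih _ (sdiff_ssubset hins (insert_nonempty u C)) _ fun _ _ => min_le_right _ _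
    obtain ⟨B, -, -⟩ := exists_extend hu hκ hC hCcard hslack A
    exact ⟨B⟩

variable {R : Finset V} (A : DPAssignment G κ R)

lemma adj_and_mem_P_of_mem_f {x y : V} (hx : x ∈ A.D) (hy : y ∈ A.f x) :
    G.Adj x y ∧ y ∈ A.P :=
  mem_nbrW.1 (A.subset_nbrW x hx hy)

def toGraph : SimpleGraph V :=
  SimpleGraph.fromRel fun x y => x ∈ A.D ∧ y ∈ A.f x

lemma toGraph_adj {x y : V} :
    A.toGraph.Adj x y ↔ x ≠ y ∧ (x ∈ A.D ∧ y ∈ A.f x ∨ y ∈ A.D ∧ x ∈ A.f y) :=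
  SimpleGraph.fromRel_adj _ x y

lemma filter_toGraph_adj {x : V} (hx : x ∈ A.D) : univ.filter (A.toGraph.Adj x) = A.f x := by
  ext y
  simp only [mem_filter, mem_univ, true_and, toGraph_adj]
  constructor
  · rintro ⟨-, hxy | ⟨hy, hxf⟩⟩
    · exact hxy.2
    · exact absurd (A.adj_and_mem_P_of_mem_f hy hxf).2 (disjoint_left.1 A.disjoint hx)
  · exact fun hy => ⟨(A.adj_and_mem_P_of_mem_f hx hy).1.ne, Or.inl ⟨hx, hy⟩⟩

theorem isDPNash_toGraph (A : DPAssignment G κ univ) (hκ : ∀ v, κ v ≤ deg G v) :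
    IsDPNash G κ A.D A.P A.toGraph := by
  refine ⟨fun x y hxy => ?_, A.union_eq, A.disjoint, fun x y hxy => ?_, fun p hp => ?_,
    fun x hx => ?_⟩
  · rcases (A.toGraph_adj.1 hxy).2 with ⟨hx, hy⟩ | ⟨hy, hx⟩
    · exact (A.adj_and_mem_P_of_mem_f hx hy).1
    · exact (A.adj_and_mem_P_of_mem_f hy hx).1.symm
  · rcases (A.toGraph_adj.1 hxy).2 with ⟨hx, hy⟩ | ⟨hy, hx⟩
    · exact Or.inl ⟨hx, (A.adj_and_mem_P_of_mem_f hx hy).2⟩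
    · exact Or.inr ⟨(A.adj_and_mem_P_of_mem_f hy hx).2, hy⟩
  · obtain ⟨x, hx, hpx⟩ := A.covers p hp
    refine card_pos.2 ⟨x, mem_filter.2 ⟨mem_univ x, ?_⟩⟩
    exact A.toGraph_adj.2 ⟨(A.adj_and_mem_P_of_mem_f hx hpx).1.ne', Or.inr ⟨hx, hpx⟩⟩
  · rw [deg, A.filter_toGraph_adj hx, A.card_eq x hx, min_eq_right (hκ x)]

end DPAssignment

/-- If `|N_G(u) ∩ X| ≤ κ u` then there is a DP-Nash subgraph with `u` in the
`D`-set and `N_G(u) ∩ X` inside the `P`-set. -/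
theorem stmt2 (G : SimpleGraph V) (κ : V → ℕ) (hκ : ∀ v, κ v ≤ deg G v)
    (u : V) (hu : (nbrW G u (XX G κ)).card ≤ κ u) :
    ∃ (D P : Finset V) (H : SimpleGraph V),
      IsDPNash G κ D P H ∧ u ∈ D ∧ nbrW G u (XX G κ) ⊆ P := by
  have hκ' : ∀ x ∈ univ, κ x ≤ (nbrW G x univ).card := fun x _ => card_nbrW_univ G x ▸ hκ x
  obtain ⟨C, hXC, hC, hCcard⟩ := exists_subsuperset_card_eq
    (nbrW_mono G u (subset_univ (XX G κ))) hu (hκ' u (mem_univ u))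
  have hslack : ∀ v ∈ univ \ insert u C, G.Adj u v → κ v < (nbrW G v univ).card := by
    intro v hv huv
    refine (hκ' v (mem_univ v)).lt_of_ne fun hvX => (mem_sdiff.1 hv).2 (mem_insert_of_mem ?_)
    exact hXC (mem_nbrW.2 ⟨huv, mem_filter.2 ⟨mem_univ v, hvX.trans (card_nbrW_univ G v)⟩⟩)
  obtain ⟨A⟩ := DPAssignment.nonempty (G := G)
    (fun v => min (κ v) (nbrW G v (univ \ insert u C)).card) _ fun _ _ => min_le_right _ _
  obtain ⟨B, huB, hCB⟩ := DPAssignment.exists_extend (mem_univ u) hκ' hC hCcard hslack A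
  exact ⟨B.D, B.P, B.toGraph, B.isDPNash_toGraph hκ, huB, hXC.trans hCB⟩
end
end

section
/- Let (G,κ) be a capacitated graph with κ(x) ≤ d_G(x) for all x, let X = {x : κ(x) = d_G(x)}. If a vertex u satisfies |N_G(u) ∩ X| < κ(u) and w ∈ N_G(u) \ X, then there exists a DP-Nash subgraph (D, P; E) of (G,κ) with u ∈ D and {w} ∪ (N_G(u) ∩ X) ⊆ P. -/
open Finset
open scoped Classical

noncomputable section

variable {V : Type*} [Fintype V]

/-!
Call `x` saturated in a graph if `κ x` equals its degree there. Since `|N(u) ∩ X| < κ u`, deleting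
edges from `u` to unsaturated neighbours other than `w` saturates `u` while keeping `κ ≤ deg`.
Deleting further edges between two unsaturated vertices, for as long as possible, yields a
spanning subgraph in which every edge has a saturated endpoint. There, take a maximal independent
set `A ∋ u` of saturated vertices, let `P = N(A)` and `D = V \ P`. Every neighbour of a vertex of
`D` lies in `P`, so letting each `x ∈ D` keep `κ x` of its edges gives a DP-Nash subgraph; the
vertices of `A` keep all their edges, so no vertex of `P` is isolated. Since `κ ≤ deg` throughout,
the subgraph is DP-Nash in `G` too.
-/

open SimpleGraph

section Degree

variable {G H : SimpleGraph V} {x : V}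

lemma deg_eq_card_of_adj_iff {s : Finset V} (h : ∀ y, H.Adj x y ↔ y ∈ s) :
    deg H x = s.card := by
  unfold deg
  congr 1
  ext y
  simp [h y]

lemma deg_pos_of_adj {y : V} (h : H.Adj x y) : 0 < deg H x :=
  card_pos.2 ⟨y, by simp [h]⟩

lemma deg_le_deg_add_card {s : Finset V} (h : ∀ y, G.Adj x y → H.Adj x y ∨ y ∈ s) :
    deg G x ≤ deg H x + s.card :=
  calc deg G x ≤ (univ.filter (H.Adj x) ∪ s).card :=
        card_le_card fun y hy => by simpa using h y (by simpa using hy)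
    _ ≤ deg H x + s.card := card_union_le _ _

lemma deg_mono (hle : H ≤ G) : deg H x ≤ deg G x :=
  card_le_card fun y hy => by simpa using hle (by simpa using hy)

lemma adj_of_le_of_deg_le (hle : H ≤ G) (hdeg : deg G x ≤ deg H x) {y : V} (hy : G.Adj x y) :
    H.Adj x y := by
  have hsub : univ.filter (H.Adj x) ⊆ univ.filter (G.Adj x) := fun y hy => by
    simpa using hle (by simpa using hy)
  have hy' : y ∈ univ.filter (G.Adj x) := by simpa using hy
  rw [← eq_of_subset_of_card_le hsub hdeg] at hy'
  simpa using hy'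

end Degree

lemma mem_XX {G : SimpleGraph V} {κ : V → ℕ} {x : V} : x ∈ XX G κ ↔ κ x = deg G x := by
  simp [XX]

lemma IsDPNash.mono {G' G : SimpleGraph V} {κ : V → ℕ} {D P : Finset V} {H : SimpleGraph V}
    (h : IsDPNash G' κ D P H) (hle : G' ≤ G) (hκ' : ∀ v, κ v ≤ deg G' v)
    (hκ : ∀ v, κ v ≤ deg G v) : IsDPNash G κ D P H := by
  obtain ⟨hHG', hcover, hdisj, hbip, hP, hD⟩ := h
  refine ⟨hHG'.trans hle, hcover, hdisj, hbip, hP, fun x hx => ?_⟩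
  rw [hD x hx, min_eq_right (hκ' x), min_eq_right (hκ x)]


lemma exists_isDPNash_univ_sdiff (G : SimpleGraph V) (κ : V → ℕ) (hκ : ∀ v, κ v ≤ deg G v)
    (P : Finset V) (hDP : ∀ x ∉ P, ∀ y, G.Adj x y → y ∈ P)
    (hP : ∀ p ∈ P, ∃ a ∉ P, a ∈ XX G κ ∧ G.Adj a p) :
    ∃ H, IsDPNash G κ (univ \ P) P H := by
  choose S hSG hSκ using fun v => exists_subset_card_eq (hκ v)
  have hSadj : ∀ v y, y ∈ S v → G.Adj v y := fun v y hy => by simpa using hSG v hy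
  have hSP : ∀ x ∉ P, S x ⊆ P := fun x hx y hy => hDP x hx y (hSadj x y hy)
  let H := fromRel fun x y => x ∉ P ∧ y ∈ S x
  have hHD : ∀ x ∉ P, ∀ y, H.Adj x y ↔ y ∈ S x := by
    intro x hx y
    simp only [H, fromRel_adj]
    constructor
    · rintro ⟨-, ⟨-, hy⟩ | ⟨hy, hxy⟩⟩
      exacts [hy, absurd (hSP y hy hxy) hx]
    · exact fun hy => ⟨(hSadj x y hy).ne, Or.inl ⟨hx, hy⟩⟩
  refine ⟨H, ⟨?_, ?_, disjoint_sdiff_self_left, ?_, ?_, ?_⟩⟩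
  · rintro x y ⟨-, ⟨-, hy⟩ | ⟨-, hx⟩⟩
    exacts [hSadj x y hy, (hSadj y x hx).symm]
  · simp
  · rintro x y ⟨-, ⟨hx, hy⟩ | ⟨hy, hx⟩⟩
    · exact Or.inl ⟨by simpa using hx, hSP x hx hy⟩
    · exact Or.inr ⟨hSP y hy hx, by simpa using hy⟩
  · intro p hp
    obtain ⟨a, haP, haX, hap⟩ := hP p hp
    have hSa : univ.filter (G.Adj a) = S a :=
      (eq_of_subset_of_card_le (hSG a) (by rw [hSκ, (mem_XX.1 haX)]; rfl)).symm
    exact deg_pos_of_adj ((hHD a haP p).2 (hSa ▸ by simpa using hap)).symm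
  · intro x hx
    have hxP : x ∉ P := by simpa using hx
    rw [deg_eq_card_of_adj_iff (hHD x hxP), hSκ, min_eq_right (hκ x)]

lemma exists_isDPNash_of_forall_adj_mem_XX (G : SimpleGraph V) (κ : V → ℕ)
    (hκ : ∀ v, κ v ≤ deg G v) (hcover : ∀ x y, G.Adj x y → x ∈ XX G κ ∨ y ∈ XX G κ)
    {u : V} (hu : u ∈ XX G κ) :
    ∃ D P H, IsDPNash G κ D P H ∧ u ∈ D ∧ ∀ y, G.Adj u y → y ∈ P := by
  obtain ⟨A, huA, ⟨hAX, hAind⟩, hAmax⟩ := exists_maximal_ge_of_wellFoundedGT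
    (fun A : Set V => A ⊆ XX G κ ∧ G.IsIndepSet A) {u} ⟨by simpa using hu, by simp⟩
  set P := univ.filter fun p => ∃ a ∈ A, G.Adj a p with hPdef
  have hmemP : ∀ p, p ∈ P ↔ ∃ a ∈ A, G.Adj a p := by simp [hPdef]
  have hAP : ∀ a ∈ A, a ∉ P := fun a ha hP => by
    obtain ⟨b, hb, hba⟩ := (hmemP a).1 hP
    exact hAind hb ha hba.ne hba
  have hXP : ∀ x ∈ XX G κ, x ∉ A → x ∈ P := by
    intro x hx hxA
    by_contra hxP
    have hind : G.IsIndepSet (insert x A) := hAind.insert fun a ha _ =>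
      ⟨fun hxa => hxP ((hmemP x).2 ⟨a, ha, hxa.symm⟩), fun hax => hxP ((hmemP x).2 ⟨a, ha, hax⟩)⟩
    exact hxA (hAmax ⟨Set.insert_subset hx hAX, hind⟩ (Set.subset_insert x A) (Set.mem_insert x A))
  have hDP : ∀ x ∉ P, ∀ y, G.Adj x y → y ∈ P := by
    intro x hxP y hxy
    by_cases hxA : x ∈ A
    · exact (hmemP y).2 ⟨x, hxA, hxy⟩
    have hxX : x ∉ XX G κ := fun hxX => hxP (hXP x hxX hxA)
    have hyA : y ∉ A := fun hyA => hxP ((hmemP x).2 ⟨y, hyA, hxy.symm⟩)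
    exact hXP y ((hcover x y hxy).resolve_left hxX) hyA
  obtain ⟨H, hH⟩ := exists_isDPNash_univ_sdiff G κ hκ P hDP fun p hp => by
    obtain ⟨a, ha, hap⟩ := (hmemP p).1 hp
    exact ⟨a, hAP a ha, hAX ha, hap⟩
  have huA : u ∈ A := huA rfl
  exact ⟨univ \ P, P, H, hH, by simpa using hAP u huA, fun y => hDP u (hAP u huA) y⟩

lemma exists_le_mem_XX_of_card_nbrW_le (G : SimpleGraph V) (κ : V → ℕ)
    (hκ : ∀ v, κ v ≤ deg G v) {u : V} {K : Finset V} (hXK : XX G κ ⊆ K)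
    (hu : (nbrW G u K).card ≤ κ u) :
    ∃ G' ≤ G, (∀ v, κ v ≤ deg G' v) ∧ u ∈ XX G' κ ∧ ∀ y ∈ K, G.Adj u y → G'.Adj u y := by
  set C := univ.filter fun y => G.Adj u y ∧ y ∉ K
  have hsplit : (nbrW G u K).card + C.card = deg G u := by
    rw [deg, ← card_filter_add_card_filter_not (s := univ.filter (G.Adj u)) (p := (· ∈ K))]
    simp only [nbrW, C, filter_filter]
  obtain ⟨T, hTC, hTcard⟩ := exists_subset_card_eq (s := C) (n := deg G u - κ u) (by omega)
  have hT : ∀ t ∈ T, G.Adj u t ∧ t ∉ K := fun t ht => by simpa [C] using hTC ht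
  set G' := G.deleteEdges ((fun t => s(u, t)) '' T)
  have hG'adj : ∀ x y, G'.Adj x y ↔ G.Adj x y ∧ ¬(x = u ∧ y ∈ T) ∧ ¬(y = u ∧ x ∈ T) := by
    intro x y
    simp only [G', deleteEdges_adj, Set.mem_image, Sym2.eq_iff]
    grind
  have hdegu : deg G' u = κ u := by
    have hTN : T ⊆ univ.filter (G.Adj u) := fun t ht => by simpa using (hT t ht).1
    rw [deg_eq_card_of_adj_iff (s := univ.filter (G.Adj u) \ T), card_sdiff_of_subset hTN]
    · rw [hTcard]
      exact Nat.sub_sub_self (hκ u)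
    · intro y
      simp only [hG'adj, mem_sdiff, mem_filter, mem_univ, true_and]
      exact ⟨fun h => ⟨h.1, h.2.1⟩, fun h => ⟨h.1, h.2, fun h' => h.1.ne h'.1.symm⟩⟩
  have hκ' : ∀ v, κ v ≤ deg G' v := by
    intro v
    by_cases hvu : v = u
    · exact hvu ▸ hdegu.ge
    have hlost : ∀ y, G.Adj v y → G'.Adj v y ∨ y ∈ (if v ∈ T then {u} else ∅ : Finset V) := by
      intro y hy
      by_cases h : G'.Adj v y
      · exact Or.inl h
      · right
        simp only [hG'adj, not_and] at h
        grind
    have hdrop := deg_le_deg_add_card hlost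
    split_ifs at hdrop with hvT
    · have hvX : v ∉ XX G κ := fun hvX => (hT v hvT).2 (hXK hvX)
      have hlt := (hκ v).lt_of_ne (mt mem_XX.2 hvX)
      rw [card_singleton] at hdrop
      omega
    · exact (hκ v).trans (by simpa using hdrop)
  exact ⟨G', deleteEdges_le _, hκ', mem_XX.2 hdegu.symm, fun y hyK hy =>
    (hG'adj u y).2 ⟨hy, fun h => (hT y h.2).2 hyK, fun h => hy.ne h.1.symm⟩⟩

lemma exists_le_forall_adj_mem_XX (G : SimpleGraph V) (κ : V → ℕ) (hκ : ∀ v, κ v ≤ deg G v) :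
    ∃ G' ≤ G, (∀ v, κ v ≤ deg G' v) ∧ ∀ x y, G'.Adj x y → x ∈ XX G' κ ∨ y ∈ XX G' κ := by
  obtain ⟨G', hle, hκ', hmin⟩ :=
    exists_minimal_le_of_wellFoundedLT (fun G' : SimpleGraph V => ∀ v, κ v ≤ deg G' v) G hκ
  refine ⟨G', hle, hκ', fun a b hab => ?_⟩
  by_contra! hunsat
  simp only [mem_XX] at hunsat
  set G'' := G'.deleteEdges {s(a, b)}
  have hdel : ∀ v, κ v ≤ deg G'' v := by
    intro v
    by_cases hv : v = a ∨ v = b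
    · have hdrop : deg G' v ≤ deg G'' v + ({if v = a then b else a} : Finset V).card :=
        deg_le_deg_add_card fun y hy => by
          by_cases hvy : s(v, y) = s(a, b)
          · right
            simp only [Sym2.eq_iff] at hvy
            grind
          · exact Or.inl (deleteEdges_adj.2 ⟨hy, hvy⟩)
      have hlt : κ v < deg G' v := by
        rcases hv with rfl | rfl
        exacts [(hκ' v).lt_of_ne hunsat.1, (hκ' v).lt_of_ne hunsat.2]
      rw [card_singleton] at hdrop
      omega
    · have hdrop := deg_le_deg_add_card (H := G'') (x := v) (s := ∅) fun y hy =>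
        Or.inl (deleteEdges_adj.2 ⟨hy, by simp only [Set.mem_singleton_iff, Sym2.eq_iff]; tauto⟩)
      simpa using (hκ' v).trans hdrop
  have := hmin hdel (deleteEdges_le _) hab
  simp [G''] at this

theorem stmt3_general (G : SimpleGraph V) (κ : V → ℕ) (hκ : ∀ v, κ v ≤ deg G v)
    (u w : V) (hu : (nbrW G u (XX G κ)).card < κ u)
    (hw : G.Adj u w) :
    ∃ (D P : Finset V) (H : SimpleGraph V),
      IsDPNash G κ D P H ∧ u ∈ D ∧ w ∈ P ∧ nbrW G u (XX G κ) ⊆ P := by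
  have hK : (nbrW G u (insert w (XX G κ))).card ≤ κ u := by
    refine (card_le_card fun y hy => ?_).trans ((card_insert_le w _).trans hu)
    simp only [nbrW, mem_filter, mem_insert, mem_univ, true_and] at hy ⊢
    tauto
  obtain ⟨G₁, hG₁, hκ₁, hu₁, hkeep⟩ :=
    exists_le_mem_XX_of_card_nbrW_le G κ hκ (subset_insert w _) hK
  obtain ⟨G₂, hG₂, hκ₂, hcover⟩ := exists_le_forall_adj_mem_XX G₁ κ hκ₁
  have hdeg : deg G₁ u ≤ deg G₂ u := (mem_XX.1 hu₁).ge.trans (hκ₂ u)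
  have hu₂ : u ∈ XX G₂ κ := 
    mem_XX.2 ((hκ₂ u).antisymm ((deg_mono hG₂).trans (mem_XX.1 hu₁).ge))
  obtain ⟨D, P, H, hH, huD, hNP⟩ := exists_isDPNash_of_forall_adj_mem_XX G₂ κ hκ₂ hcover hu₂
  have hP : ∀ y ∈ insert w (XX G κ), G.Adj u y → y ∈ P := fun y hy huy =>
    hNP y (adj_of_le_of_deg_le hG₂ hdeg (hkeep y hy huy))
  refine ⟨D, P, H, hH.mono (hG₂.trans hG₁) hκ₂ hκ, huD, hP w (mem_insert_self w _) hw,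
    fun x hx => ?_⟩
  simp only [nbrW, mem_filter, mem_univ, true_and] at hx
  exact hP x (mem_insert_of_mem hx.2) hx.1

/-- If `|N_G(u) ∩ X| < κ u` and `w ∈ N_G(u) \ X` then there is a DP-Nash
subgraph with `u ∈ D` and `{w} ∪ (N_G(u) ∩ X) ⊆ P`. -/
theorem stmt3 (G : SimpleGraph V) (κ : V → ℕ) (hκ : ∀ v, κ v ≤ deg G v)
    (u w : V) (hu : (nbrW G u (XX G κ)).card < κ u)
    (hw : G.Adj u w) (hwX : w ∉ XX G κ) :
    ∃ (D P : Finset V) (H : SimpleGraph V),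
      IsDPNash G κ D P H ∧ u ∈ D ∧ w ∈ P ∧ nbrW G u (XX G κ) ⊆ P :=
  stmt3_general G κ hκ u w hu hw
end
end

section
/- Let (G,κ) be a capacitated graph with κ(x) ≤ d_G(x) for all x, and define X = {x : κ(x) = d_G(x)}, Y = N(X) \ X, Z = V(G) \ (X ∪ Y). If X ∪ Z is an independent set in G, then there exists a DP-Nash subgraph (D, P; E') of (G,κ) with D = X ∪ Z and P = Y. -/
open Finset
open scoped Classical

noncomputable section

variable {V : Type*} [Fintype V]

/-!
Every vertex of `X ∪ Z` picks `κ x` of its neighbours and keeps only the edges to them. For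
`x ∈ X` this keeps all of `N(x)`, so every `y ∈ Y` stays joined to its neighbour in `X`; and since
`X ∪ Z` is independent, no vertex of `X ∪ Z` gains further edges from the choices of the others,
so its degree is exactly `κ x`.
-/

def starGraph {W : Type*} (D : Finset W) (T : W → Finset W) : SimpleGraph W :=
  SimpleGraph.fromRel fun x y => x ∈ D ∧ y ∈ T x

section starGraph

variable {W : Type*} {G : SimpleGraph W} {D P : Finset W} {T : W → Finset W}

theorem starGraph_le (hT : ∀ x ∈ D, ∀ y ∈ T x, G.Adj x y) : starGraph D T ≤ G := by
  rintro u v ⟨-, ⟨hu, hv⟩ | ⟨hv, hu⟩⟩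
  · exact hT u hu v hv
  · exact (hT v hv u hu).symm

theorem starGraph_adj_iff (hind : ∀ u ∈ D, ∀ v ∈ D, ¬ G.Adj u v)
    (hT : ∀ x ∈ D, ∀ y ∈ T x, G.Adj x y) {x y : W} (hx : x ∈ D) :
    (starGraph D T).Adj x y ↔ y ∈ T x := by
  refine ⟨?_, fun hy => ⟨(hT x hx y hy).ne, Or.inl ⟨hx, hy⟩⟩⟩
  rintro ⟨-, ⟨-, hy⟩ | ⟨hy, hxy⟩⟩
  · exact hy
  · exact absurd (hT y hy x hxy) (hind y hy x hx)

theorem deg_starGraph [Fintype W] (hind : ∀ u ∈ D, ∀ v ∈ D, ¬ G.Adj u v)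
    (hT : ∀ x ∈ D, ∀ y ∈ T x, G.Adj x y) {x : W} (hx : x ∈ D) :
    deg (starGraph D T) x = (T x).card := by
  unfold deg
  congr 1
  ext y
  simpa only [mem_filter, mem_univ, true_and] using starGraph_adj_iff hind hT hx

theorem starGraph_adj_mem_partition [Fintype W] (hcover : D ∪ P = univ)
    (hind : ∀ u ∈ D, ∀ v ∈ D, ¬ G.Adj u v) (hT : ∀ x ∈ D, ∀ y ∈ T x, G.Adj x y)
    {u v : W} (huv : (starGraph D T).Adj u v) : (u ∈ D ∧ v ∈ P) ∨ (u ∈ P ∧ v ∈ D) := by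
  have mem_P : ∀ w, w ∉ D → w ∈ P := fun w hw =>
    (mem_union.mp (hcover ▸ mem_univ w)).resolve_left hw
  obtain ⟨-, ⟨hu, hv⟩ | ⟨hv, hu⟩⟩ := huv
  · exact Or.inl ⟨hu, mem_P v fun hvD => hind u hu v hvD (hT u hu v hv)⟩
  · exact Or.inr ⟨mem_P u fun huD => hind v hv u huD (hT v hv u hu), hv⟩

theorem isDPNash_starGraph [Fintype W] (κ : W → ℕ) (hcover : D ∪ P = univ)
    (hdisj : Disjoint D P) (hind : ∀ u ∈ D, ∀ v ∈ D, ¬ G.Adj u v)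
    (hT : ∀ x ∈ D, ∀ y ∈ T x, G.Adj x y) (hcard : ∀ x ∈ D, (T x).card = min (deg G x) (κ x))
    (hP : ∀ y ∈ P, ∃ x ∈ D, y ∈ T x) :
    IsDPNash G κ D P (starGraph D T) := by
  refine ⟨starGraph_le hT, hcover, hdisj,
    fun u v huv => starGraph_adj_mem_partition hcover hind hT huv, ?_, ?_⟩
  · intro y hy
    obtain ⟨x, hx, hyx⟩ := hP y hy
    have hadj : (starGraph D T).Adj y x := ((starGraph_adj_iff hind hT hx).mpr hyx).symm
    exact card_pos.mpr ⟨x, mem_filter.mpr ⟨mem_univ x, hadj⟩⟩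
  · intro x hx
    rw [deg_starGraph hind hT hx, hcard x hx]

end starGraph

section XYZ

variable {G : SimpleGraph V} {κ : V → ℕ}

theorem XX_union_ZZ_union_YY : XX G κ ∪ ZZ G κ ∪ YY G κ = univ := by
  ext v
  simp only [ZZ, mem_union, mem_sdiff, mem_univ, true_and, iff_true]
  tauto

theorem disjoint_XX_union_ZZ_YY : Disjoint (XX G κ ∪ ZZ G κ) (YY G κ) := by
  rw [disjoint_left]
  intro v hv hvY
  rcases mem_union.mp hv with hvX | hvZ
  · exact (mem_filter.mp hvY).2.1 hvX
  · exact (mem_sdiff.mp hvZ).2 (mem_union_right _ hvY)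

end XYZ

theorem stmt5_general (G : SimpleGraph V) (κ : V → ℕ) (hκ : ∀ v, κ v ≤ deg G v)
    (hind : ∀ u ∈ XX G κ ∪ ZZ G κ, ∀ v ∈ XX G κ ∪ ZZ G κ, ¬ G.Adj u v) :
    ∃ H : SimpleGraph V, IsDPNash G κ (XX G κ ∪ ZZ G κ) (YY G κ) H := by
  choose T hTsub hTcard using fun x => exists_subset_card_eq (hκ x)
  have hTadj : ∀ x, ∀ y ∈ T x, G.Adj x y := fun x y hy => (mem_filter.mp (hTsub x hy)).2
  have hTX : ∀ x ∈ XX G κ, T x = univ.filter (G.Adj x) := fun x hx =>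
    eq_of_subset_of_card_le (hTsub x) (by rw [hTcard x, (mem_filter.mp hx).2]; rfl)
  refine ⟨starGraph _ T, isDPNash_starGraph κ XX_union_ZZ_union_YY disjoint_XX_union_ZZ_YY hind
    (fun x _ => hTadj x) (fun x _ => by rw [hTcard x, min_eq_right (hκ x)]) ?_⟩
  intro y hy
  obtain ⟨x, hx, hxy⟩ := (mem_filter.mp hy).2.2
  exact ⟨x, mem_union_left _ hx, by rw [hTX x hx]; exact mem_filter.mpr ⟨mem_univ y, hxy⟩⟩

/-- If `X ∪ Z` is independent then there is a DP-Nash subgraph with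
`D`-set `X ∪ Z` and `P`-set `Y`. -/
theorem stmt5 (G : SimpleGraph V) (κ : V → ℕ) (hκ : ∀ v, κ v ≤ deg G v)
    (hedge : ∀ u v, G.Adj u v → 0 < κ u ∨ 0 < κ v)
    (hind : ∀ u ∈ XX G κ ∪ ZZ G κ, ∀ v ∈ XX G κ ∪ ZZ G κ, ¬ G.Adj u v) :
    ∃ H : SimpleGraph V, IsDPNash G κ (XX G κ ∪ ZZ G κ) (YY G κ) H :=
  stmt5_general G κ hκ hind
end
end
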